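/- arXiv:1901.08645 — 3 statements merged into one kernel-verified Lean document; each statement's English description precedes it below -/
import Mathlib

section
/- Let S ⊆ [n] and let H be a complete graph on a vertex set disjoint from nothing in particular. Then the intersection ⟨x_i, y_i : i ∈ S⟩ ∩ J_H in K[x_1,...,x_n,y_1,...,y_n] is generated by the minors Δ_{ij} for edges {i,j} of H with i ∈ S or j ∈ S, together with x_i Δ_{kℓ} and y_i Δ_{kℓ} for i ∈ S and edges {k,ℓ} of H with k,ℓ ∉ S. -/
open MvPolynomial

/-- The 2-minor `Δ_{ij} = x_i y_j - x_j y_i` in `K[x_1,…,x_n,y_1,…,y_n]`,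
where `x_i := X (Sum.inl i)` and `y_i := X (Sum.inr i)`. -/
noncomputable def binDelta (K : Type) [Field K] (n : ℕ) (i j : Fin n) :
    MvPolynomial (Fin n ⊕ Fin n) K :=
  X (Sum.inl i) * X (Sum.inr j) - X (Sum.inl j) * X (Sum.inr i)

section Aux

variable (K : Type) [Field K] (n : ℕ) (S : Finset (Fin n))

/-- The evaluation killing the variables indexed by `S`. -/
noncomputable def epsHom : MvPolynomial (Fin n ⊕ Fin n) K →ₐ[K] MvPolynomial (Fin n ⊕ Fin n) K :=
  aeval (fun v => Sum.elim (fun i => if i ∈ S then 0 else X (Sum.inl i))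
    (fun i => if i ∈ S then 0 else X (Sum.inr i)) v)

/-- The monomial prime `⟨x_i, y_i : i ∈ S⟩`. -/
noncomputable def mS : Ideal (MvPolynomial (Fin n ⊕ Fin n) K) :=
  Ideal.span {f | ∃ i ∈ S, f = X (Sum.inl i) ∨ f = X (Sum.inr i)}

lemma X_mem_mS {v : Fin n ⊕ Fin n} (hv : Sum.elim (· ∈ S) (· ∈ S) v) :
    (X v : MvPolynomial (Fin n ⊕ Fin n) K) ∈ mS K n S := by
  apply Ideal.subset_span
  cases v with
  | inl i => exact ⟨i, hv, Or.inl rfl⟩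
  | inr i => exact ⟨i, hv, Or.inr rfl⟩

lemma sub_epsHom_mem (f : MvPolynomial (Fin n ⊕ Fin n) K) :
    f - epsHom K n S f ∈ mS K n S := by
  have h : (Ideal.Quotient.mkₐ K (mS K n S)).comp (epsHom K n S) =
      Ideal.Quotient.mkₐ K (mS K n S) := by
    apply MvPolynomial.algHom_ext
    intro v
    simp only [AlgHom.comp_apply, epsHom, aeval_X]
    cases v with
    | inl i =>
      by_cases h : i ∈ S
      · rw [Sum.elim_inl, if_pos h, map_zero]
        exact (Ideal.Quotient.eq_zero_iff_mem.mpr (X_mem_mS K n S (v := Sum.inl i) h)).symm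
      · rw [Sum.elim_inl, if_neg h]
    | inr i =>
      by_cases h : i ∈ S
      · rw [Sum.elim_inr, if_pos h, map_zero]
        exact (Ideal.Quotient.eq_zero_iff_mem.mpr (X_mem_mS K n S (v := Sum.inr i) h)).symm
      · rw [Sum.elim_inr, if_neg h]
  have := congrArg (fun g => g f) h
  simp only [AlgHom.comp_apply, Ideal.Quotient.mkₐ_eq_mk] at this
  exact Ideal.Quotient.eq.mp this.symm

lemma epsHom_eq_zero_of_mem {f : MvPolynomial (Fin n ⊕ Fin n) K}
    (hf : f ∈ mS K n S) : epsHom K n S f = 0 := by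
  refine Submodule.span_induction ?_ ?_ ?_ ?_ hf
  · rintro x ⟨i, hi, rfl | rfl⟩ <;>
      simp [epsHom, hi]
  · simp
  · intro x y _ _ hx hy; simp [hx, hy]
  · intro a x _ hx
    simp [smul_eq_mul, map_mul, hx]

lemma epsHom_binDelta {k l : Fin n} (hk : k ∉ S) (hl : l ∉ S) :
    epsHom K n S (binDelta K n k l) = binDelta K n k l := by
  simp [epsHom, binDelta, hk, hl]

end Aux

/-- Let `S ⊆ [n]` and let `H` be the complete graph on a vertex set `V ⊆ [n]`, with binomial
edge ideal `J_H = ⟨Δ_{ij} : i ≠ j in V⟩`. Then `⟨x_i, y_i : i ∈ S⟩ ∩ J_H` is generated by the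
minors `Δ_{ij}` for edges `{i,j}` of `H` with `i ∈ S` or `j ∈ S`, together with `x_i Δ_{kℓ}`
and `y_i Δ_{kℓ}` for `i ∈ S` and edges `{k,ℓ}` of `H` with `k, ℓ ∉ S`. -/
theorem inter_monomial_prime_completeBEI (K : Type) [Field K] (n : ℕ)
    (S V : Finset (Fin n)) :
    (Ideal.span {f : MvPolynomial (Fin n ⊕ Fin n) K |
        ∃ i ∈ S, f = X (Sum.inl i) ∨ f = X (Sum.inr i)} ⊓
      Ideal.span {f | ∃ i ∈ V, ∃ j ∈ V, i ≠ j ∧ f = binDelta K n i j}) =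
    Ideal.span ({f | ∃ i ∈ V, ∃ j ∈ V, i ≠ j ∧ (i ∈ S ∨ j ∈ S) ∧ f = binDelta K n i j} ∪
      {f | ∃ i ∈ S, ∃ k ∈ V, ∃ l ∈ V, k ≠ l ∧ k ∉ S ∧ l ∉ S ∧
        (f = X (Sum.inl i) * binDelta K n k l ∨ f = X (Sum.inr i) * binDelta K n k l)}) := by
  classical
  set A := MvPolynomial (Fin n ⊕ Fin n) K
  set ε := epsHom K n S
  -- the ideals
  set m : Ideal A := mS K n S with hm_def
  set J : Ideal A := Ideal.span {f | ∃ i ∈ V, ∃ j ∈ V, i ≠ j ∧ f = binDelta K n i j}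
  set J₁ : Ideal A := Ideal.span
    {f | ∃ i ∈ V, ∃ j ∈ V, i ≠ j ∧ (i ∈ S ∨ j ∈ S) ∧ f = binDelta K n i j}
  set J₂ : Ideal A := Ideal.span
    {f | ∃ k ∈ V, ∃ l ∈ V, k ≠ l ∧ k ∉ S ∧ l ∉ S ∧ f = binDelta K n k l}
  set I₂ : Ideal A := Ideal.span
    {f | ∃ i ∈ S, ∃ k ∈ V, ∃ l ∈ V, k ≠ l ∧ k ∉ S ∧ l ∉ S ∧
      (f = X (Sum.inl i) * binDelta K n k l ∨ f = X (Sum.inr i) * binDelta K n k l)}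
  have hdelta_mem_m : ∀ i j : Fin n, i ∈ S ∨ j ∈ S → binDelta K n i j ∈ m := by
    intro i j hij
    have hx : ∀ a b : Fin n, a ∈ S ∨ b ∈ S →
        (X (Sum.inl a) * X (Sum.inr b) : A) ∈ m := by
      intro a b hab
      rcases hab with h | h
      · exact Ideal.mul_mem_right _ _ (X_mem_mS K n S (v := Sum.inl a) h)
      · exact Ideal.mul_mem_left _ _ (X_mem_mS K n S (v := Sum.inr b) h)
    exact Ideal.sub_mem _ (hx i j hij) (hx j i hij.symm)
  -- J₁ is contained in m
  have hJ₁m : J₁ ≤ m := by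
    rw [Ideal.span_le]
    rintro f ⟨i, hi, j, hj, hne, hS, rfl⟩
    exact hdelta_mem_m i j hS
  -- m * J₂ ≤ I₂
  have hmul : m * J₂ ≤ I₂ := by
    rw [Ideal.mul_le]
    rintro r hr s hs
    refine Submodule.span_induction ?_ ?_ ?_ ?_ hr
    · rintro x hx
      refine Submodule.span_induction ?_ ?_ ?_ ?_ hs
      · rintro y ⟨k, hk, l, hl, hne, hkS, hlS, rfl⟩
        obtain ⟨i, hi, hxi⟩ := hx
        apply Ideal.subset_span
        rcases hxi with rfl | rfl
        · exact ⟨i, hi, k, hk, l, hl, hne, hkS, hlS, Or.inl rfl⟩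
        · exact ⟨i, hi, k, hk, l, hl, hne, hkS, hlS, Or.inr rfl⟩
      · simpa using I₂.zero_mem
      · intro y z _ _ hy hz
        simpa [mul_add] using Ideal.add_mem _ hy hz
      · intro a y _ hy
        have : x * (a • y) = a • (x * y) := by
          simp only [smul_eq_mul]; ring
        rw [this]
        exact Ideal.mul_mem_left _ _ hy
    · simpa using I₂.zero_mem
    · intro y z _ _ hy hz
      simpa [add_mul] using Ideal.add_mem _ hy hz
    · intro a y _ hy
      have : (a • y) * s = a • (y * s) := by
        simp only [smul_eq_mul]; ring
      rw [this]
      exact Ideal.mul_mem_left _ _ hy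
  -- ε fixes J₂ and f - ε f ∈ I₂ for f ∈ J₂
  have hJ₂ : ∀ f ∈ J₂, f - ε f ∈ I₂ ∧ ε f ∈ J₂ := by
    intro f hf
    refine Submodule.span_induction ?_ ?_ ?_ ?_ hf
    · rintro x ⟨k, hk, l, hl, hne, hkS, hlS, rfl⟩
      constructor
      · rw [epsHom_binDelta K n S hkS hlS, sub_self]
        exact I₂.zero_mem
      · rw [epsHom_binDelta K n S hkS hlS]
        exact Ideal.subset_span ⟨k, hk, l, hl, hne, hkS, hlS, rfl⟩
    · simp only [map_zero, sub_zero]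
      exact ⟨I₂.zero_mem, J₂.zero_mem⟩
    · rintro x y _ _ ⟨hx1, hx2⟩ ⟨hy1, hy2⟩
      refine ⟨?_, by rw [map_add]; exact Ideal.add_mem _ hx2 hy2⟩
      have : x + y - ε (x + y) = (x - ε x) + (y - ε y) := by
        rw [map_add]; ring
      rw [this]
      exact Ideal.add_mem _ hx1 hy1
    · rintro a x _ ⟨hx1, hx2⟩
      have hsm : (a • x : A) = a * x := rfl
      refine ⟨?_, ?_⟩
      · have : a * x - ε (a * x) = a * (x - ε x) + (a - ε a) * ε x := by
          rw [map_mul]; ring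
        rw [hsm, this]
        refine Ideal.add_mem _ (Ideal.mul_mem_left _ _ hx1) ?_
        exact hmul (Ideal.mul_mem_mul (sub_epsHom_mem K n S a) hx2)
      · rw [hsm, map_mul]
        exact Ideal.mul_mem_left _ _ hx2
  -- m ⊓ J₂ ≤ I₂
  have hkey : m ⊓ J₂ ≤ I₂ := by
    rintro f ⟨hfm, hfJ₂⟩
    have h1 := (hJ₂ f hfJ₂).1
    rwa [epsHom_eq_zero_of_mem K n S hfm, sub_zero] at h1
  apply le_antisymm
  · -- hard direction
    rintro f ⟨hfm, hfJ⟩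
    rw [Ideal.span_union]
    have hJle : J ≤ J₁ ⊔ J₂ := by
      rw [Ideal.span_le]
      rintro g ⟨i, hi, j, hj, hne, rfl⟩
      by_cases hS : i ∈ S ∨ j ∈ S
      · exact Ideal.mem_sup_left (Ideal.subset_span ⟨i, hi, j, hj, hne, hS, rfl⟩)
      · push_neg at hS
        exact Ideal.mem_sup_right (Ideal.subset_span ⟨i, hi, j, hj, hne, hS.1, hS.2, rfl⟩)
    obtain ⟨f₁, hf₁, f₂, hf₂, rfl⟩ := Submodule.mem_sup.mp (hJle hfJ)
    have hf₂m : f₂ ∈ m := by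
      have := Ideal.sub_mem _ hfm (hJ₁m hf₁)
      have h2 : f₁ + f₂ - f₁ = f₂ := by ring
      rw [h2] at this; exact this
    have hf₂I₂ : f₂ ∈ I₂ := hkey ⟨hf₂m, hf₂⟩
    exact Ideal.add_mem _ (Ideal.mem_sup_left hf₁) (Ideal.mem_sup_right hf₂I₂)
  · -- easy direction
    rw [Ideal.span_le]
    rintro f (⟨i, hi, j, hj, hne, hS, rfl⟩ | ⟨i, hi, k, hk, l, hl, hne, hkS, hlS, hf⟩)
    · exact ⟨hdelta_mem_m i j hS, Ideal.subset_span ⟨i, hi, j, hj, hne, rfl⟩⟩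
    · have hJmem : binDelta K n k l ∈ J := Ideal.subset_span ⟨k, hk, l, hl, hne, rfl⟩
      rcases hf with rfl | rfl
      · exact ⟨Ideal.mul_mem_right _ _ (X_mem_mS K n S (v := Sum.inl i) hi),
          Ideal.mul_mem_left _ _ hJmem⟩
      · exact ⟨Ideal.mul_mem_right _ _ (X_mem_mS K n S (v := Sum.inr i) hi),
          Ideal.mul_mem_left _ _ hJmem⟩
end

section
/- For two complete graphs H_1 and H_2 on vertex subsets of [n], with edges {i,j} in H_1, {k,ℓ} in H_2 and {j,k} a common edge of H_1 and H_2, the identity x_j y_ℓ Δ_{ik} - x_ℓ y_k Δ_{ij} = x_i y_k Δ_{jℓ} - x_j y_i Δ_{kℓ} holds in K[x_1,...,x_n,y_1,...,y_n], and this element lies in J_{H_1} ∩ J_{H_2}. -/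
/-! The element is written once as a combination of `Δ_{ik}, Δ_{ij}`, generators of `J_{H₁}`,
and once, after the polynomial identity, as a combination of `Δ_{jℓ}, Δ_{kℓ}`, generators of
`J_{H₂}`. -/

open MvPolynomial

section

variable (K : Type) [Field K] (n : ℕ)

noncomputable def completeBinomialEdgeIdeal (V : Finset (Fin n)) :
    Ideal (MvPolynomial (Fin n ⊕ Fin n) K) :=
  Ideal.span {f | ∃ a ∈ V, ∃ b ∈ V, a ≠ b ∧ f = binDelta K n a b}

@[simp]
lemma binDelta_self (a : Fin n) : binDelta K n a a = 0 := by
  simp [binDelta]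

variable {K n}

lemma binDelta_mem_completeBinomialEdgeIdeal {V : Finset (Fin n)} {a b : Fin n}
    (ha : a ∈ V) (hb : b ∈ V) : binDelta K n a b ∈ completeBinomialEdgeIdeal K n V := by
  by_cases hab : a = b
  · simp [hab]
  · exact Ideal.subset_span ⟨a, ha, b, hb, hab, rfl⟩

lemma X_mul_X_mul_binDelta_sub_eq (i j k l : Fin n) :
    X (Sum.inl j) * X (Sum.inr l) * binDelta K n i k -
        X (Sum.inl l) * X (Sum.inr k) * binDelta K n i j =
      X (Sum.inl i) * X (Sum.inr k) * binDelta K n j l -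
        X (Sum.inl j) * X (Sum.inr i) * binDelta K n k l := by
  simp only [binDelta]
  ring

end

theorem common_edge_element_general (K : Type) [Field K] (n : ℕ) (V₁ V₂ : Finset (Fin n))
    (i j k l : Fin n) (hi : i ∈ V₁) (hj₁ : j ∈ V₁)
    (hk₂ : k ∈ V₂) (hl : l ∈ V₂)
    (hj₂ : j ∈ V₂) (hk₁ : k ∈ V₁) :
    (X (Sum.inl j) * X (Sum.inr l) * binDelta K n i k -
        X (Sum.inl l) * X (Sum.inr k) * binDelta K n i j =
      X (Sum.inl i) * X (Sum.inr k) * binDelta K n j l -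
        X (Sum.inl j) * X (Sum.inr i) * binDelta K n k l) ∧
    X (Sum.inl j) * X (Sum.inr l) * binDelta K n i k -
        X (Sum.inl l) * X (Sum.inr k) * binDelta K n i j ∈
      Ideal.span {f : MvPolynomial (Fin n ⊕ Fin n) K |
          ∃ a ∈ V₁, ∃ b ∈ V₁, a ≠ b ∧ f = binDelta K n a b} ⊓
        Ideal.span {f | ∃ a ∈ V₂, ∃ b ∈ V₂, a ≠ b ∧ f = binDelta K n a b} := by
  have hswap := X_mul_X_mul_binDelta_sub_eq (K := K) i j k l
  refine ⟨hswap, Ideal.mem_inf.2 ⟨?_, ?_⟩⟩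
  · exact sub_mem (Ideal.mul_mem_left _ _ (binDelta_mem_completeBinomialEdgeIdeal hi hk₁))
      (Ideal.mul_mem_left _ _ (binDelta_mem_completeBinomialEdgeIdeal hi hj₁))
  · rw [hswap]
    exact sub_mem (Ideal.mul_mem_left _ _ (binDelta_mem_completeBinomialEdgeIdeal hj₂ hl))
      (Ideal.mul_mem_left _ _ (binDelta_mem_completeBinomialEdgeIdeal hk₂ hl))

/-- Let `H₁`, `H₂` be the complete graphs on vertex sets `V₁, V₂ ⊆ [n]`, with binomial edge
ideals `J_{H₁}`, `J_{H₂}`. For edges `{i,j}` of `H₁` and `{k,ℓ}` of `H₂` such that `{j,k}` is a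
common edge of `H₁` and `H₂`, the identity
`x_j y_ℓ Δ_{ik} - x_ℓ y_k Δ_{ij} = x_i y_k Δ_{jℓ} - x_j y_i Δ_{kℓ}` holds, and this element
lies in `J_{H₁} ∩ J_{H₂}`. -/
theorem common_edge_element (K : Type) [Field K] (n : ℕ) (V₁ V₂ : Finset (Fin n))
    (i j k l : Fin n) (hi : i ∈ V₁) (hj₁ : j ∈ V₁) (hij : i ≠ j)
    (hk₂ : k ∈ V₂) (hl : l ∈ V₂) (hkl : k ≠ l)
    (hj₂ : j ∈ V₂) (hk₁ : k ∈ V₁) (hjk : j ≠ k) :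
    (X (Sum.inl j) * X (Sum.inr l) * binDelta K n i k -
        X (Sum.inl l) * X (Sum.inr k) * binDelta K n i j =
      X (Sum.inl i) * X (Sum.inr k) * binDelta K n j l -
        X (Sum.inl j) * X (Sum.inr i) * binDelta K n k l) ∧
    X (Sum.inl j) * X (Sum.inr l) * binDelta K n i k -
        X (Sum.inl l) * X (Sum.inr k) * binDelta K n i j ∈
      Ideal.span {f : MvPolynomial (Fin n ⊕ Fin n) K |
          ∃ a ∈ V₁, ∃ b ∈ V₁, a ≠ b ∧ f = binDelta K n a b} ⊓
        Ideal.span {f | ∃ a ∈ V₂, ∃ b ∈ V₂, a ≠ b ∧ f = binDelta K n a b} :=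
  common_edge_element_general K n V₁ V₂ i j k l hi hj₁ hk₂ hl hj₂ hk₁
end

section
/- Let A = K[x_1,...,x_8,y_1,...,y_8] and let J_G be the binomial edge ideal of the complete bipartite graph K_{3,5} with parts {6,7,8} and {1,2,3,4,5}. Then the minimal primary decomposition of J_G is J_G = I_{p_1} ∩ I_{p_2} ∩ I_{p_3}, where I_{p_1} = ⟨x_1,...,x_5,y_1,...,y_5⟩, I_{p_2} = ⟨Δ_{ij} : 1 ≤ i < j ≤ 8⟩, and I_{p_3} = ⟨x_6,x_7,x_8,y_6,y_7,y_8⟩. -/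
open MvPolynomial

/-- The 2-minor `Δ_{ij} = x_i y_j - x_j y_i` in `A = K[x_1,…,x_8,y_1,…,y_8]`.
Vertices `1,…,8` are represented by `0,…,7 : Fin 8`; `x_i := X (Sum.inl i)`,
`y_i := X (Sum.inr i)`. -/
noncomputable def binDelta8 (K : Type) [Field K] (i j : Fin 8) :
    MvPolynomial (Fin 8 ⊕ Fin 8) K :=
  X (Sum.inl i) * X (Sum.inr j) - X (Sum.inl j) * X (Sum.inr i)

/-- The binomial edge ideal of the complete bipartite graph `K_{3,5}` with parts
`{6,7,8}` and `{1,2,3,4,5}`. -/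
noncomputable def bipartiteIdeal (K : Type) [Field K] :
    Ideal (MvPolynomial (Fin 8 ⊕ Fin 8) K) :=
  Ideal.span {f | ∃ i j : Fin 8, (i : ℕ) < 5 ∧ 5 ≤ (j : ℕ) ∧ f = binDelta8 K i j}

/-- The three prime components of the binomial edge ideal of `K_{3,5}`:
`I_{p₁} = ⟨x_1,…,x_5,y_1,…,y_5⟩`, `I_{p₂} = ⟨Δ_{ij} : 1 ≤ i < j ≤ 8⟩`,
`I_{p₃} = ⟨x_6,x_7,x_8,y_6,y_7,y_8⟩`. -/
noncomputable def bipartiteComp (K : Type) [Field K] :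
    Fin 3 → Ideal (MvPolynomial (Fin 8 ⊕ Fin 8) K) :=
  ![Ideal.span {f | ∃ i : Fin 8, (i : ℕ) < 5 ∧ (f = X (Sum.inl i) ∨ f = X (Sum.inr i))},
    Ideal.span {f | ∃ i j : Fin 8, (i : ℕ) < (j : ℕ) ∧ f = binDelta8 K i j},
    Ideal.span {f | ∃ i : Fin 8, 5 ≤ (i : ℕ) ∧ (f = X (Sum.inl i) ∨ f = X (Sum.inr i))}]

namespace BipartiteAux

open Finsupp

abbrev Vb := (Fin 8 ⊕ Fin 8)
abbrev Mon := Vb →₀ ℕ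

noncomputable def mkm (f : Vb → ℕ) : Mon := Finsupp.equivFunOnFinite.symm f
@[simp] lemma mkm_apply (f : Vb → ℕ) (x : Vb) : mkm f x = f x := rfl

noncomputable def swap (m : Mon) (s t : Fin 8) : Mon := mkm fun x =>
  if x = Sum.inl s then m (Sum.inl s) - 1
  else if x = Sum.inl t then m (Sum.inl t) + 1
  else if x = Sum.inr s then m (Sum.inr s) + 1
  else if x = Sum.inr t then m (Sum.inr t) - 1
  else m x

def wt (m : Mon) : ℕ × (Fin 8 → ℕ) :=
  (∑ i, m (Sum.inl i), fun i => m (Sum.inl i) + m (Sum.inr i))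

def dst (m m' : Mon) : ℕ :=
  ∑ i : Fin 8, ((m (Sum.inl i) - m' (Sum.inl i)) + (m' (Sum.inl i) - m (Sum.inl i)))

lemma swap_apply_inl (m : Mon) (s t : Fin 8) (i : Fin 8) :
    swap m s t (Sum.inl i) = if i = s then m (Sum.inl s) - 1 else if i = t then m (Sum.inl t) + 1 else m (Sum.inl i) := by
  simp only [swap, mkm_apply, Sum.inl.injEq, Sum.inr.injEq, reduceCtorEq, if_false]

lemma swap_apply_inr (m : Mon) (s t : Fin 8) (i : Fin 8) :
    swap m s t (Sum.inr i) = if i = s then m (Sum.inr s) + 1 else if i = t then m (Sum.inr t) - 1 else m (Sum.inr i) := by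
  simp only [swap, mkm_apply, Sum.inl.injEq, Sum.inr.injEq, reduceCtorEq, if_false]

lemma swap_decomp (m : Mon) (s t : Fin 8) (hst : s ≠ t) (h1 : m (Sum.inl s) ≠ 0) (h2 : m (Sum.inr t) ≠ 0) :
    ∃ u : Mon, m = u + (single (Sum.inl s) 1 + single (Sum.inr t) 1) ∧
      swap m s t = u + (single (Sum.inl t) 1 + single (Sum.inr s) 1) := by
  refine ⟨mkm (fun x => if x = Sum.inl s then m (Sum.inl s) - 1 else if x = Sum.inr t then m (Sum.inr t) - 1 else m x), ?_, ?_⟩ <;>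
  · ext x
    rcases x with i | i <;>
    simp only [Finsupp.add_apply, Finsupp.single_apply, mkm_apply, swap,
      Sum.inl.injEq, Sum.inr.injEq, reduceCtorEq, if_false] <;>
    split_ifs <;> subst_vars <;> omega

lemma sum_shift (f g : Fin 8 → ℕ) (s t : Fin 8)
    (h : ∀ i, f i + (if i = s then 1 else 0) = g i + (if i = t then 1 else 0)) :
    ∑ i, f i = ∑ i, g i := by
  have := Finset.sum_congr rfl (fun i (_ : i ∈ Finset.univ) => h i)
  rw [Finset.sum_add_distrib, Finset.sum_add_distrib, Finset.sum_ite_eq' Finset.univ s fun _ => 1,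
    Finset.sum_ite_eq' Finset.univ t fun _ => 1] at this
  simp at this; omega

lemma swap_wt (m : Mon) (s t : Fin 8) (hst : s ≠ t) (h1 : m (Sum.inl s) ≠ 0) (h2 : m (Sum.inr t) ≠ 0) :
    wt (swap m s t) = wt m := by
  unfold wt
  simp only [Prod.mk.injEq]
  constructor
  · refine sum_shift _ _ s t fun i => ?_
    rw [swap_apply_inl m s t]
    split_ifs <;> subst_vars <;> omega
  · funext i
    show swap m s t (Sum.inl i) + swap m s t (Sum.inr i) = _
    rw [swap_apply_inl m s t, swap_apply_inr m s t]
    split_ifs <;> subst_vars <;> omega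

lemma dst_swap (m m' : Mon) (s t : Fin 8) (hst : s ≠ t)
    (hs : m' (Sum.inl s) < m (Sum.inl s)) (ht : m (Sum.inl t) < m' (Sum.inl t)) :
    dst (swap m s t) m' + 2 = dst m m' := by
  unfold dst
  have h : ∀ i : Fin 8,
      ((swap m s t (Sum.inl i) - m' (Sum.inl i)) + (m' (Sum.inl i) - swap m s t (Sum.inl i)))
        + ((if i = s then 1 else 0) + (if i = t then 1 else 0))
      = ((m (Sum.inl i) - m' (Sum.inl i)) + (m' (Sum.inl i) - m (Sum.inl i))) := by
    intro i
    rw [swap_apply_inl m s t]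
    split_ifs <;> subst_vars <;> omega
  have := Finset.sum_congr rfl (fun i (_ : i ∈ Finset.univ) => h i)
  simp only [Finset.sum_add_distrib] at this ⊢
  rw [Finset.sum_ite_eq' Finset.univ s fun _ => 1,
    Finset.sum_ite_eq' Finset.univ t fun _ => 1] at this
  simp at this; omega

lemma exists_gt_lt (a a' : Fin 8 → ℕ) (hp : ∑ i, a i = ∑ i, a' i) (k : Fin 8) (hk : a k ≠ a' k) :
    ∃ s t, a' s < a s ∧ a t < a' t := by
  have h1 : ∃ s, a' s < a s := by
    by_contra h; push_neg at h
    rcases lt_or_gt_of_ne hk with hlt | hgt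
    · have : ∑ i, a i < ∑ i, a' i :=
        Finset.sum_lt_sum (fun i _ => h i) ⟨k, Finset.mem_univ k, hlt⟩
      omega
    · exact absurd (h k) (not_le.mpr hgt)
  have h2 : ∃ t, a t < a' t := by
    by_contra h; push_neg at h
    obtain ⟨s, hs⟩ := h1
    have : ∑ i, a' i < ∑ i, a i :=
      Finset.sum_lt_sum (fun i _ => h i) ⟨s, Finset.mem_univ s, hs⟩
    omega
  obtain ⟨s, hs⟩ := h1; obtain ⟨t, ht⟩ := h2
  exact ⟨s, t, hs, ht⟩

variable (K : Type) [Field K]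

lemma delta_neg (i j : Fin 8) : binDelta8 K i j = -binDelta8 K j i := by
  unfold binDelta8; ring

lemma delta_mem2 (s t : Fin 8) (hst : s ≠ t) : binDelta8 K s t ∈ bipartiteComp K 1 := by
  have h' : (s : ℕ) ≠ (t : ℕ) := fun h => hst (Fin.val_injective h)
  rcases lt_or_gt_of_ne h' with h | h
  · exact Ideal.subset_span ⟨s, t, h, rfl⟩
  · rw [delta_neg]
    exact neg_mem (Ideal.subset_span ⟨t, s, h, rfl⟩)

lemma delta_memG (s t : Fin 8) (h : (s : ℕ) < 5 ∧ 5 ≤ (t : ℕ) ∨ (t : ℕ) < 5 ∧ 5 ≤ (s : ℕ)) :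
    binDelta8 K s t ∈ bipartiteIdeal K := by
  rcases h with ⟨h1, h2⟩ | ⟨h1, h2⟩
  · exact Ideal.subset_span ⟨s, t, h1, h2, rfl⟩
  · rw [delta_neg]
    exact neg_mem (Ideal.subset_span ⟨t, s, h1, h2, rfl⟩)

/-- A swap difference is a monomial multiple of a `binDelta8`. -/
lemma swap_diff_eq (m : Mon) (s t : Fin 8) (hst : s ≠ t)
    (h1 : m (Sum.inl s) ≠ 0) (h2 : m (Sum.inr t) ≠ 0) :
    ∃ u : Mon, monomial m (1 : K) - monomial (swap m s t) 1
      = monomial u 1 * binDelta8 K s t := by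
  obtain ⟨u, hm, hm'⟩ := swap_decomp m s t hst h1 h2
  refine ⟨u, ?_⟩
  have hx : ∀ a b : Vb, (X a : MvPolynomial Vb K) * X b = monomial (single a 1 + single b 1) 1 := by
    intro a b; rw [X, X, monomial_mul, one_mul]
  rw [hm', hm, binDelta8, mul_sub, hx, hx, monomial_mul, monomial_mul, mul_one]

lemma swap_mem2 (m : Mon) (s t : Fin 8) (hst : s ≠ t)
    (h1 : m (Sum.inl s) ≠ 0) (h2 : m (Sum.inr t) ≠ 0) :
    monomial m (1 : K) - monomial (swap m s t) 1 ∈ bipartiteComp K 1 := by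
  obtain ⟨u, hu⟩ := swap_diff_eq K m s t hst h1 h2
  rw [hu]
  exact Ideal.mul_mem_left _ _ (delta_mem2 K s t hst)

lemma swap_memG (m : Mon) (s t : Fin 8)
    (h : (s : ℕ) < 5 ∧ 5 ≤ (t : ℕ) ∨ (t : ℕ) < 5 ∧ 5 ≤ (s : ℕ))
    (h1 : m (Sum.inl s) ≠ 0) (h2 : m (Sum.inr t) ≠ 0) :
    monomial m (1 : K) - monomial (swap m s t) 1 ∈ bipartiteIdeal K := by
  have hst : s ≠ t := by
    rcases h with ⟨h1', h2'⟩ | ⟨h1', h2'⟩ <;> (intro he; subst he; omega)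
  obtain ⟨u, hu⟩ := swap_diff_eq K m s t hst h1 h2
  rw [hu]
  exact Ideal.mul_mem_left _ _ (delta_memG K s t h)

lemma trans_mem (I : Ideal (MvPolynomial Vb K)) {m m₁ m' : Mon}
    (h1 : monomial m (1:K) - monomial m₁ 1 ∈ I) (h2 : monomial m₁ (1:K) - monomial m' 1 ∈ I) :
    monomial m (1:K) - monomial m' 1 ∈ I := by
  have := I.add_mem h1 h2
  simpa using this

lemma eq_of_dst_zero (m m' : Mon) (hw : wt m = wt m') (hd : dst m m' = 0) : m = m' := by
  have h1 : ∀ i, m (Sum.inl i) = m' (Sum.inl i) := by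
    intro i
    have := Finset.sum_eq_zero_iff.mp hd i (Finset.mem_univ i)
    omega
  have h2 := congrArg Prod.snd hw
  ext x
  rcases x with i | i
  · exact h1 i
  · have := congrFun h2 i
    simp only [wt] at this
    have := h1 i
    omega

lemma wt_fst (m m' : Mon) (hw : wt m = wt m') : ∑ i, m (Sum.inl i) = ∑ i, m' (Sum.inl i) :=
  congrArg Prod.fst hw

lemma wt_snd (m m' : Mon) (hw : wt m = wt m') (i : Fin 8) :
    m (Sum.inl i) + m (Sum.inr i) = m' (Sum.inl i) + m' (Sum.inr i) :=
  congrFun (congrArg Prod.snd hw) i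

/-- connectivity for the full determinantal ideal -/
lemma conn2 (m m' : Mon) (hw : wt m = wt m') :
    monomial m (1:K) - monomial m' 1 ∈ bipartiteComp K 1 := by
  generalize hn : dst m m' = n
  induction n using Nat.strong_induction_on generalizing m m' with
  | _ n ih =>
    rcases Nat.eq_zero_or_pos n with rfl | hpos
    · rw [eq_of_dst_zero m m' hw hn, sub_self]
      exact zero_mem _
    · -- there is a coordinate where they differ
      have hk : ∃ k, m (Sum.inl k) ≠ m' (Sum.inl k) := by
        by_contra h; push_neg at h
        have : dst m m' = 0 := Finset.sum_eq_zero fun i _ => by have := h i; omega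
        omega
      obtain ⟨k, hk⟩ := hk
      obtain ⟨s, t, hs, ht⟩ := exists_gt_lt (fun i => m (Sum.inl i)) (fun i => m' (Sum.inl i))
        (wt_fst m m' hw) k hk
      have hst : s ≠ t := by intro h; subst h; omega
      have h1 : m (Sum.inl s) ≠ 0 := by omega
      have h2 : m (Sum.inr t) ≠ 0 := by
        have := wt_snd m m' hw t; omega
      have hd := dst_swap m m' s t hst hs ht
      have hw1 : wt (swap m s t) = wt m' := by rw [swap_wt m s t hst h1 h2, hw]
      refine trans_mem K _ (swap_mem2 K m s t hst h1 h2) ?_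
      exact ih (dst (swap m s t) m') (by omega) _ _ hw1 rfl

lemma dswapA (m : Mon) (s r t : Fin 8) (hrs : r ≠ s) (hrt : r ≠ t) (hst : s ≠ t)
    (hbr : m (Sum.inr r) ≠ 0) :
    swap (swap m s r) r t = swap m s t := by
  ext x
  rcases x with i | i <;>
  simp only [swap, mkm_apply, Sum.inl.injEq, Sum.inr.injEq, reduceCtorEq, if_false] <;>
  split_ifs <;> subst_vars <;> omega

lemma dswapB (m : Mon) (s r t : Fin 8) (hrs : r ≠ s) (hrt : r ≠ t) (hst : s ≠ t)
    (har : m (Sum.inl r) ≠ 0) :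
    swap (swap m r t) s r = swap m s t := by
  ext x
  rcases x with i | i <;>
  simp only [swap, mkm_apply, Sum.inl.injEq, Sum.inr.injEq, reduceCtorEq, if_false] <;>
  split_ifs <;> subst_vars <;> omega

/-- two-step move through a pivot `r`, covering both "same side" cases -/
lemma two_step (m : Mon) (s r t : Fin 8) (hrs : r ≠ s) (hrt : r ≠ t) (hst : s ≠ t)
    (hleg1 : (s : ℕ) < 5 ∧ 5 ≤ (r : ℕ) ∨ (r : ℕ) < 5 ∧ 5 ≤ (s : ℕ))
    (hleg2 : (r : ℕ) < 5 ∧ 5 ≤ (t : ℕ) ∨ (t : ℕ) < 5 ∧ 5 ≤ (r : ℕ))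
    (h1 : m (Sum.inl s) ≠ 0) (h2 : m (Sum.inr t) ≠ 0)
    (hcr : m (Sum.inl r) + m (Sum.inr r) ≠ 0) :
    monomial m (1:K) - monomial (swap m s t) 1 ∈ bipartiteIdeal K := by
  by_cases hbr : m (Sum.inr r) ≠ 0
  · -- forward through r : swap m s r, then swap _ r t
    have step1 := swap_memG K m s r hleg1 h1 hbr
    have e1 : swap m s r (Sum.inl r) ≠ 0 := by
      rw [swap_apply_inl]; split_ifs <;> subst_vars <;> omega
    have e2 : swap m s r (Sum.inr t) ≠ 0 := by
      rw [swap_apply_inr]; split_ifs <;> subst_vars <;> omega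
    have step2 := swap_memG K (swap m s r) r t hleg2 e1 e2
    rw [dswapA m s r t hrs hrt hst hbr] at step2
    exact trans_mem K _ step1 step2
  · push_neg at hbr
    have har : m (Sum.inl r) ≠ 0 := by omega
    have step1 := swap_memG K m r t hleg2 har h2
    have e1 : swap m r t (Sum.inl s) ≠ 0 := by
      rw [swap_apply_inl]; split_ifs <;> subst_vars <;> omega
    have e2 : swap m r t (Sum.inr r) ≠ 0 := by
      rw [swap_apply_inr]; split_ifs <;> subst_vars <;> omega
    have step2 := swap_memG K (swap m r t) s r hleg1 e1 e2
    rw [dswapB m s r t hrs hrt hst har] at step2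
    exact trans_mem K _ step1 step2

/-- connectivity for the binomial edge ideal -/
lemma connG (m m' : Mon)
    (hS : ∃ i : Fin 8, (i : ℕ) < 5 ∧ m (Sum.inl i) + m (Sum.inr i) ≠ 0)
    (hT : ∃ i : Fin 8, 5 ≤ (i : ℕ) ∧ m (Sum.inl i) + m (Sum.inr i) ≠ 0)
    (hw : wt m = wt m') :
    monomial m (1:K) - monomial m' 1 ∈ bipartiteIdeal K := by
  generalize hn : dst m m' = n
  induction n using Nat.strong_induction_on generalizing m m' with
  | _ n ih =>
    rcases Nat.eq_zero_or_pos n with rfl | hpos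
    · rw [eq_of_dst_zero m m' hw hn, sub_self]
      exact zero_mem _
    · have hk : ∃ k, m (Sum.inl k) ≠ m' (Sum.inl k) := by
        by_contra h; push_neg at h
        have : dst m m' = 0 := Finset.sum_eq_zero fun i _ => by have := h i; omega
        omega
      obtain ⟨k, hk⟩ := hk
      obtain ⟨s, t, hs, ht⟩ := exists_gt_lt (fun i => m (Sum.inl i)) (fun i => m' (Sum.inl i))
        (wt_fst m m' hw) k hk
      have hst : s ≠ t := by intro h; subst h; omega
      have h1 : m (Sum.inl s) ≠ 0 := by omega
      have h2 : m (Sum.inr t) ≠ 0 := by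
        have := wt_snd m m' hw t; omega
      -- main membership step
      have hmem : monomial m (1:K) - monomial (swap m s t) 1 ∈ bipartiteIdeal K := by
        by_cases hp : (s : ℕ) < 5 <;> by_cases hq : (t : ℕ) < 5
        · -- both in S, pivot in T
          obtain ⟨r, hr5, hcr⟩ := hT
          have hrs : r ≠ s := by intro h; subst h; omega
          have hrt : r ≠ t := by intro h; subst h; omega
          exact two_step K m s r t hrs hrt hst (Or.inl ⟨hp, hr5⟩) (Or.inr ⟨hq, hr5⟩) h1 h2 hcr
        · exact swap_memG K m s t (Or.inl ⟨hp, by omega⟩) h1 h2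
        · exact swap_memG K m s t (Or.inr ⟨hq, by omega⟩) h1 h2
        · -- both in T, pivot in S
          obtain ⟨r, hr5, hcr⟩ := hS
          have hrs : r ≠ s := by intro h; subst h; omega
          have hrt : r ≠ t := by intro h; subst h; omega
          exact two_step K m s r t hrs hrt hst (Or.inr ⟨hr5, by omega⟩) (Or.inl ⟨hr5, by omega⟩) h1 h2 hcr
      -- recurse
      have hd := dst_swap m m' s t hst hs ht
      have hwt := swap_wt m s t hst h1 h2
      have hw1 : wt (swap m s t) = wt m' := by rw [hwt, hw]
      have hc : ∀ i, swap m s t (Sum.inl i) + swap m s t (Sum.inr i)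
          = m (Sum.inl i) + m (Sum.inr i) := fun i => wt_snd _ _ hwt i
      refine trans_mem K _ hmem ?_
      refine ih (dst (swap m s t) m') (by omega) _ _ ?_ ?_ hw1 rfl
      · obtain ⟨i, hi, hci⟩ := hS; exact ⟨i, hi, by rw [hc]; exact hci⟩
      · obtain ⟨i, hi, hci⟩ := hT; exact ⟨i, hi, by rw [hc]; exact hci⟩

/-- generic induction: zero class sums plus connectivity give ideal membership -/
lemma indGen {M : Type} [DecidableEq M] (I : Ideal (MvPolynomial Vb K)) (w : Mon → M) (Good : Mon → Prop)
    (conn : ∀ m m', Good m → Good m' → w m = w m' → monomial m (1:K) - monomial m' 1 ∈ I) :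
    ∀ f : MvPolynomial Vb K, (∀ m ∈ f.support, Good m) →
      (∀ μ : M, (∑ m ∈ f.support, if w m = μ then coeff m f else 0) = 0) → f ∈ I := by
  intro f
  generalize hn : f.support.card = n
  induction n using Nat.strong_induction_on generalizing f with
  | _ n ih =>
    intro hGood hSum
    rcases eq_or_ne f 0 with rfl | hf0
    · exact zero_mem _
    · obtain ⟨m0, hm0⟩ := (MvPolynomial.support_nonempty.mpr hf0)
      have hc0 : coeff m0 f ≠ 0 := MvPolynomial.mem_support_iff.mp hm0
      -- find a second monomial in the same class
      have hex : ∃ m1 ∈ f.support, m1 ≠ m0 ∧ w m1 = w m0 := by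
        by_contra h; push_neg at h
        have := hSum (w m0)
        rw [Finset.sum_eq_single_of_mem m0 hm0 (fun b hb hbne => by
          rcases eq_or_ne (w b) (w m0) with hwb | hwb
          · exact absurd hwb (h b hb hbne)
          · exact if_neg hwb)] at this
        rw [if_pos rfl] at this
        exact hc0 this
      obtain ⟨m1, hm1, hne, hw1⟩ := hex
      set c := coeff m0 f with hc
      set g := f - c • (monomial m0 1 - monomial m1 1) with hg
      have hdiff : monomial m0 (1:K) - monomial m1 1 ∈ I :=
        conn m0 m1 (hGood m0 hm0) (hGood m1 hm1) (hw1.symm ▸ rfl)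
      -- coefficients of g
      have hgco : ∀ x, coeff x g = coeff x f - (if x = m0 then c else 0) + (if x = m1 then c else 0) := by
        intro x
        rw [hg, MvPolynomial.coeff_sub, MvPolynomial.coeff_smul, MvPolynomial.coeff_sub,
          MvPolynomial.coeff_monomial, MvPolynomial.coeff_monomial, smul_eq_mul]
        have h01 : m0 ≠ m1 := fun h => hne h.symm
        rcases eq_or_ne x m0 with rfl | hx0
        · rw [if_pos rfl, if_pos rfl, if_neg (fun h => hne h : ¬ m1 = x), if_neg (fun h => hne h.symm : ¬ x = m1)]
          ring
        · rw [if_neg (fun h => hx0 h.symm), if_neg hx0]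
          rcases eq_or_ne x m1 with rfl | hx1
          · rw [if_pos rfl, if_pos rfl]; ring
          · rw [if_neg (fun h => hx1 h.symm), if_neg hx1]; ring
      have hsub : g.support ⊆ f.support.erase m0 := by
        intro x hx
        rw [MvPolynomial.mem_support_iff] at hx
        rw [hgco x] at hx
        rcases eq_or_ne x m0 with rfl | hxm0
        · exfalso
          apply hx
          rw [if_pos rfl, if_neg (fun h => hne h.symm : ¬ (x = m1)), hc]
          ring
        · refine Finset.mem_erase.mpr ⟨hxm0, MvPolynomial.mem_support_iff.mpr ?_⟩
          rcases eq_or_ne x m1 with rfl | hxm1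
          · exact MvPolynomial.mem_support_iff.mp hm1
          · simp only [if_neg hxm0, if_neg hxm1] at hx
            simpa using hx
      have hcard : g.support.card < n := by
        rw [← hn]
        exact lt_of_le_of_lt (Finset.card_le_card hsub)
          (Finset.card_erase_lt_of_mem hm0)
      have hGoodg : ∀ x ∈ g.support, Good x := fun x hx =>
        hGood x (Finset.mem_of_mem_erase (hsub hx))
      have hSumg : ∀ μ : M, (∑ x ∈ g.support, if w x = μ then coeff x g else 0) = 0 := by
        intro μ
        have hbig : (∑ x ∈ g.support, if w x = μ then coeff x g else 0)
            = ∑ x ∈ f.support, if w x = μ then coeff x g else 0 := by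
          apply Finset.sum_subset (fun x hx => Finset.mem_of_mem_erase (hsub hx))
          intro x _ hxg
          have : coeff x g = 0 := by
            by_contra h; exact hxg (MvPolynomial.mem_support_iff.mpr h)
          simp [this]
        rw [hbig]
        have : (∑ x ∈ f.support, if w x = μ then coeff x g else 0)
            = (∑ x ∈ f.support, if w x = μ then coeff x f else 0)
              - (∑ x ∈ f.support, if w x = μ then (if x = m0 then c else 0) else 0)
              + (∑ x ∈ f.support, if w x = μ then (if x = m1 then c else 0) else 0) := by
          rw [← Finset.sum_sub_distrib, ← Finset.sum_add_distrib]
          refine Finset.sum_congr rfl fun x _ => ?_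
          rw [hgco x]
          split_ifs <;> ring
        rw [this, hSum μ]
        have e0 : (∑ x ∈ f.support, if w x = μ then (if x = m0 then c else 0) else 0)
            = if w m0 = μ then c else 0 := by
          rw [Finset.sum_eq_single_of_mem m0 hm0 (fun b _ hbne => by
            split_ifs with h1 h2 <;> first | rfl | exact absurd h2 hbne)]
          simp
        have e1 : (∑ x ∈ f.support, if w x = μ then (if x = m1 then c else 0) else 0)
            = if w m1 = μ then c else 0 := by
          rw [Finset.sum_eq_single_of_mem m1 hm1 (fun b _ hbne => by
            split_ifs with h1 h2 <;> first | rfl | exact absurd h2 hbne)]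
          simp
        rw [e0, e1, hw1]
        ring
      have hgI : g ∈ I := ih g.support.card hcard g rfl hGoodg hSumg
      have hfg : f = g + MvPolynomial.C c * (monomial m0 1 - monomial m1 1) := by
        rw [hg, ← MvPolynomial.smul_eq_C_mul]; ring
      rw [hfg]
      exact I.add_mem hgI (Ideal.mul_mem_left _ _ hdiff)


open Classical in
noncomputable def killS (S : Set Vb) : MvPolynomial Vb K →ₐ[K] MvPolynomial Vb K :=
  aeval fun v => if v ∈ S then 0 else X v

open Classical in
lemma killS_monomial_clean (S : Set Vb) (m : Mon) (c : K) (h : ∀ v ∈ S, m v = 0) :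
    killS K S (monomial m c) = monomial m c := by
  rw [killS, aeval_monomial, monomial_eq]
  congr 1
  apply Finsupp.prod_congr
  intro v hv
  rw [if_neg]
  intro hvS
  exact (Finsupp.mem_support_iff.mp hv) (h v hvS)

open Classical in
lemma killS_monomial_dirty (S : Set Vb) (m : Mon) (c : K) (v : Vb) (hv : v ∈ S) (hm : m v ≠ 0) :
    killS K S (monomial m c) = 0 := by
  rw [killS, aeval_monomial]
  have : (m.prod fun w k => (if w ∈ S then 0 else X w : MvPolynomial Vb K) ^ k) = 0 := by
    apply Finset.prod_eq_zero (Finsupp.mem_support_iff.mpr hm)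
    show ((if v ∈ S then 0 else X v : MvPolynomial Vb K)) ^ m v = 0
    rw [if_pos hv]
    exact zero_pow hm
  rw [this, mul_zero]

lemma ker_killS (S : Set Vb) : RingHom.ker (killS K S) = Ideal.span (X '' S) := by
  apply le_antisymm
  · intro f hf
    rw [RingHom.mem_ker] at hf
    rw [mem_ideal_span_X_image]
    by_contra h
    push_neg at h
    obtain ⟨m0, hm0, hclean⟩ := h
    have key : coeff m0 (killS K S f) = coeff m0 f := by
      conv_lhs => rw [f.as_sum, map_sum]
      rw [MvPolynomial.coeff_sum]
      rw [Finset.sum_eq_single_of_mem m0 hm0]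
      · rw [killS_monomial_clean K S m0 _ hclean, MvPolynomial.coeff_monomial, if_pos rfl]
      · intro m hm hmne
        by_cases hd : ∃ v ∈ S, m v ≠ 0
        · obtain ⟨v, hvS, hmv⟩ := hd
          rw [killS_monomial_dirty K S m _ v hvS hmv, MvPolynomial.coeff_zero]
        · push_neg at hd
          rw [killS_monomial_clean K S m _ hd, MvPolynomial.coeff_monomial, if_neg hmne]
    rw [hf] at key
    simp only [MvPolynomial.coeff_zero] at key
    exact (MvPolynomial.mem_support_iff.mp hm0) key.symm
  · rw [Ideal.span_le]
    rintro f ⟨v, hv, rfl⟩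
    rw [SetLike.mem_coe, RingHom.mem_ker]
    show killS K S (X v) = 0
    rw [killS, aeval_X, if_pos hv]


noncomputable def segre : MvPolynomial Vb K →ₐ[K] MvPolynomial (Fin 2 ⊕ Fin 8) K :=
  aeval fun v => match v with
    | Sum.inl i => X (Sum.inl 0) * X (Sum.inr i)
    | Sum.inr i => X (Sum.inl 1) * X (Sum.inr i)

noncomputable def tgt (v : Vb) : (Fin 2 ⊕ Fin 8) →₀ ℕ :=
  match v with
  | Sum.inl i => single (Sum.inl 0) 1 + single (Sum.inr i) 1
  | Sum.inr i => single (Sum.inl 1) 1 + single (Sum.inr i) 1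

noncomputable def TT (m : Mon) : (Fin 2 ⊕ Fin 8) →₀ ℕ := m.sum fun v k => k • tgt v

lemma TT_apply (m : Mon) (x : Fin 2 ⊕ Fin 8) :
    TT m x = ∑ v : Vb, m v * tgt v x := by
  rw [TT, Finsupp.sum_apply]
  rw [Finsupp.sum_fintype]
  · refine Finset.sum_congr rfl fun v _ => ?_
    simp
  · intro v; simp

lemma TT_inl0 (m : Mon) : TT m (Sum.inl 0) = ∑ i, m (Sum.inl i) := by
  rw [TT_apply, Fintype.sum_sum_type]
  have h1 : ∀ i : Fin 8, tgt (Sum.inl i) (Sum.inl 0) = 1 := fun i => by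
    simp [tgt, Finsupp.single_apply]
  have h2 : ∀ i : Fin 8, tgt (Sum.inr i) (Sum.inl 0) = 0 := fun i => by
    simp [tgt, Finsupp.single_apply]
  simp [h1, h2]

lemma TT_inl1 (m : Mon) : TT m (Sum.inl 1) = ∑ i, m (Sum.inr i) := by
  rw [TT_apply, Fintype.sum_sum_type]
  have h1 : ∀ i : Fin 8, tgt (Sum.inl i) (Sum.inl 1) = 0 := fun i => by
    simp [tgt, Finsupp.single_apply]
  have h2 : ∀ i : Fin 8, tgt (Sum.inr i) (Sum.inl 1) = 1 := fun i => by
    simp [tgt, Finsupp.single_apply]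
  simp [h1, h2]

lemma TT_inr (m : Mon) (j : Fin 8) : TT m (Sum.inr j) = m (Sum.inl j) + m (Sum.inr j) := by
  rw [TT_apply, Fintype.sum_sum_type]
  have h1 : ∀ i : Fin 8, tgt (Sum.inl i) (Sum.inr j) = if i = j then 1 else 0 := fun i => by
    simp [tgt, Finsupp.single_apply, Sum.inr.injEq]
  have h2 : ∀ i : Fin 8, tgt (Sum.inr i) (Sum.inr j) = if i = j then 1 else 0 := fun i => by
    simp [tgt, Finsupp.single_apply, Sum.inr.injEq]
  simp only [h1, h2, mul_ite, mul_one, mul_zero]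
  rw [Finset.sum_ite_eq' Finset.univ j fun x => m (Sum.inl x),
    Finset.sum_ite_eq' Finset.univ j fun x => m (Sum.inr x)]
  simp

lemma TT_eq_iff (m m' : Mon) : TT m = TT m' ↔ wt m = wt m' := by
  constructor
  · intro h
    unfold wt
    have h0 := DFunLike.congr_fun h (Sum.inl 0)
    simp only [TT_inl0] at h0
    refine Prod.ext h0 ?_
    funext i
    have hi := DFunLike.congr_fun h (Sum.inr i)
    simp only [TT_inr] at hi
    exact hi
  · intro h
    have hfst : ∑ i, m (Sum.inl i) = ∑ i, m' (Sum.inl i) := congrArg Prod.fst h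
    have hsnd : ∀ i, m (Sum.inl i) + m (Sum.inr i) = m' (Sum.inl i) + m' (Sum.inr i) :=
      fun i => congrFun (congrArg Prod.snd h) i
    have hsum : ∑ i, (m (Sum.inl i) + m (Sum.inr i)) = ∑ i, (m' (Sum.inl i) + m' (Sum.inr i)) :=
      Finset.sum_congr rfl fun i _ => hsnd i
    rw [Finset.sum_add_distrib, Finset.sum_add_distrib] at hsum
    ext x
    rcases x with a | i
    · have : a = 0 ∨ a = 1 := by omega
      rcases this with rfl | rfl
      · rw [TT_inl0, TT_inl0, hfst]
      · rw [TT_inl1, TT_inl1]; omega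
    · rw [TT_inr, TT_inr, hsnd i]

lemma segre_X (v : Vb) : segre K (X v) = monomial (tgt v) 1 := by
  have hx : ∀ a b : Fin 2 ⊕ Fin 8, (X a : MvPolynomial (Fin 2 ⊕ Fin 8) K) * X b
      = monomial (single a 1 + single b 1) 1 := by
    intro a b; rw [X, X, monomial_mul, one_mul]
  rcases v with i | i <;> simp only [segre, aeval_X] <;> exact hx _ _

lemma segre_monomial (m : Mon) (c : K) : segre K (monomial m c) = monomial (TT m) c := by
  induction m using Finsupp.induction with
  | zero =>
    rw [show TT 0 = 0 from Finsupp.sum_zero_index]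
    simp [monomial_zero']
  | single_add v k m hv hk ihm =>
    have hTT : TT (single v k + m) = k • tgt v + TT m := by
      rw [TT, Finsupp.sum_add_index (by intro a _; simp) (by intro a _ b1 b2; rw [add_smul]),
        Finsupp.sum_single_index (by simp)]
      rfl
    have hmm : monomial (single v k + m) c = monomial (single v k) 1 * monomial m c := by
      rw [monomial_mul, one_mul]
    rw [hmm, map_mul, ← X_pow_eq_monomial, map_pow, segre_X, ihm, hTT, monomial_pow, one_pow,
      monomial_mul, one_mul]

lemma segre_ker_classSum (f : MvPolynomial Vb K) (hf : segre K f = 0) :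
    ∀ μ : ℕ × (Fin 8 → ℕ), (∑ m ∈ f.support, if wt m = μ then coeff m f else 0) = 0 := by
  intro μ
  by_cases hex : ∃ m0 ∈ f.support, wt m0 = μ
  · obtain ⟨m0, hm0, hwm0⟩ := hex
    have key : coeff (TT m0) (segre K f) = ∑ m ∈ f.support, if wt m = μ then coeff m f else 0 := by
      conv_lhs => rw [f.as_sum, map_sum]
      rw [MvPolynomial.coeff_sum]
      refine Finset.sum_congr rfl fun m _ => ?_
      rw [segre_monomial, MvPolynomial.coeff_monomial]
      by_cases h : TT m = TT m0
      · rw [if_pos h, if_pos (by rw [← hwm0]; exact (TT_eq_iff m m0).mp h)]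
      · rw [if_neg h, if_neg (by rw [← hwm0]; exact fun hw => h ((TT_eq_iff m m0).mpr hw))]
    rw [hf] at key
    simpa using key.symm
  · push_neg at hex
    exact Finset.sum_eq_zero fun m hm => if_neg (hex m hm)


/-! ### identification of the components -/

def S1 : Set Vb := {v | Sum.elim Fin.val Fin.val v < 5}
def S3 : Set Vb := {v | 5 ≤ Sum.elim Fin.val Fin.val v}

lemma comp0_eq : bipartiteComp K 0 =
    Ideal.span {f | ∃ i : Fin 8, (i : ℕ) < 5 ∧ (f = X (Sum.inl i) ∨ f = X (Sum.inr i))} := rfl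

lemma comp1_eq : bipartiteComp K 1 =
    Ideal.span {f | ∃ i j : Fin 8, (i : ℕ) < (j : ℕ) ∧ f = binDelta8 K i j} := rfl

lemma comp2_eq : bipartiteComp K 2 =
    Ideal.span {f | ∃ i : Fin 8, 5 ≤ (i : ℕ) ∧ (f = X (Sum.inl i) ∨ f = X (Sum.inr i))} := rfl

lemma comp0_span : bipartiteComp K 0 = Ideal.span (X '' S1) := by
  rw [comp0_eq]
  congr 1
  ext f
  constructor
  · rintro ⟨i, hi, rfl | rfl⟩
    · exact ⟨Sum.inl i, hi, rfl⟩
    · exact ⟨Sum.inr i, hi, rfl⟩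
  · rintro ⟨v, hv, rfl⟩
    rcases v with i | i
    · exact ⟨i, hv, Or.inl rfl⟩
    · exact ⟨i, hv, Or.inr rfl⟩

lemma comp2_span : bipartiteComp K 2 = Ideal.span (X '' S3) := by
  rw [comp2_eq]
  congr 1
  ext f
  constructor
  · rintro ⟨i, hi, rfl | rfl⟩
    · exact ⟨Sum.inl i, hi, rfl⟩
    · exact ⟨Sum.inr i, hi, rfl⟩
  · rintro ⟨v, hv, rfl⟩
    rcases v with i | i
    · exact ⟨i, hv, Or.inl rfl⟩
    · exact ⟨i, hv, Or.inr rfl⟩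

lemma comp0_ker : bipartiteComp K 0 = RingHom.ker (killS K S1) := by
  rw [comp0_span, ker_killS]

lemma comp2_ker : bipartiteComp K 2 = RingHom.ker (killS K S3) := by
  rw [comp2_span, ker_killS]

lemma segre_delta (i j : Fin 8) : segre K (binDelta8 K i j) = 0 := by
  simp only [binDelta8, map_sub, map_mul, segre, aeval_X]
  ring

lemma comp1_ker : bipartiteComp K 1 = RingHom.ker (segre K) := by
  apply le_antisymm
  · rw [comp1_eq, Ideal.span_le]
    rintro f ⟨i, j, hij, rfl⟩
    rw [SetLike.mem_coe, RingHom.mem_ker]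
    exact segre_delta K i j
  · intro f hf
    rw [RingHom.mem_ker] at hf
    exact indGen K (bipartiteComp K 1) wt (fun _ => True)
      (fun m m' _ _ h => conn2 K m m' h) f (fun _ _ => trivial)
      (segre_ker_classSum K f hf)

lemma mem_comp0_iff (f : MvPolynomial Vb K) :
    f ∈ bipartiteComp K 0 ↔ ∀ m ∈ f.support, ∃ v ∈ S1, m v ≠ 0 := by
  rw [comp0_span]; exact mem_ideal_span_X_image

lemma mem_comp2_iff (f : MvPolynomial Vb K) :
    f ∈ bipartiteComp K 2 ↔ ∀ m ∈ f.support, ∃ v ∈ S3, m v ≠ 0 := by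
  rw [comp2_span]; exact mem_ideal_span_X_image

/-- the hard inclusion -/
lemma inf_le_ideal (f : MvPolynomial Vb K) (h0 : f ∈ bipartiteComp K 0)
    (h1 : f ∈ bipartiteComp K 1) (h2 : f ∈ bipartiteComp K 2) :
    f ∈ bipartiteIdeal K := by
  rw [mem_comp0_iff] at h0
  rw [mem_comp2_iff] at h2
  rw [comp1_ker, RingHom.mem_ker] at h1
  refine indGen K (bipartiteIdeal K) wt
    (fun m => (∃ i : Fin 8, (i : ℕ) < 5 ∧ m (Sum.inl i) + m (Sum.inr i) ≠ 0) ∧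
      (∃ i : Fin 8, 5 ≤ (i : ℕ) ∧ m (Sum.inl i) + m (Sum.inr i) ≠ 0))
    (fun m m' hm _ hw => connG K m m' hm.1 hm.2 hw) f ?_ (segre_ker_classSum K f h1)
  intro m hm
  constructor
  · obtain ⟨v, hv, hmv⟩ := h0 m hm
    rcases v with i | i
    · exact ⟨i, hv, by omega⟩
    · exact ⟨i, hv, by omega⟩
  · obtain ⟨v, hv, hmv⟩ := h2 m hm
    rcases v with i | i
    · exact ⟨i, hv, by omega⟩
    · exact ⟨i, hv, by omega⟩

lemma delta_eq_monomials (i j : Fin 8) :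
    binDelta8 K i j = monomial (single (Sum.inl i) 1 + single (Sum.inr j) 1) 1
      - monomial (single (Sum.inl j) 1 + single (Sum.inr i) 1) 1 := by
  have hx : ∀ a b : Vb, (X a : MvPolynomial Vb K) * X b = monomial (single a 1 + single b 1) 1 := by
    intro a b; rw [X, X, monomial_mul, one_mul]
  rw [binDelta8, hx, hx]

lemma coeff_delta (i j : Fin 8) (hij : i ≠ j) :
    coeff (single (Sum.inl i) 1 + single (Sum.inr j) 1) (binDelta8 K i j) = 1 := by
  rw [delta_eq_monomials, MvPolynomial.coeff_sub, MvPolynomial.coeff_monomial,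
    MvPolynomial.coeff_monomial, if_pos rfl, if_neg, sub_zero]
  intro h
  have := DFunLike.congr_fun h (Sum.inl i)
  simp only [Finsupp.add_apply, Finsupp.single_apply] at this
  split_ifs at this <;> simp_all

lemma pair_support (i j : Fin 8) (v : Vb)
    (h : (single (Sum.inl i) 1 + single (Sum.inr j) 1 : Mon) v ≠ 0) :
    v = Sum.inl i ∨ v = Sum.inr j := by
  rcases v with a | a <;>
    simp only [Finsupp.add_apply, Finsupp.single_apply] at h <;>
    split_ifs at h with h1 h2 <;> simp_all

lemma delta_not_mem_comp0 (i j : Fin 8) (hi : 5 ≤ (i : ℕ)) (hj : 5 ≤ (j : ℕ)) (hij : i ≠ j) :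
    binDelta8 K i j ∉ bipartiteComp K 0 := by
  intro hmem
  rw [mem_comp0_iff] at hmem
  have hm1 : (single (Sum.inl i) 1 + single (Sum.inr j) 1 : Mon) ∈ (binDelta8 K i j).support := by
    rw [MvPolynomial.mem_support_iff, coeff_delta K i j hij]
    exact one_ne_zero
  obtain ⟨v, hv, hmv⟩ := hmem _ hm1
  rcases pair_support i j v hmv with rfl | rfl
  · simp only [S1, Set.mem_setOf_eq, Sum.elim_inl] at hv; omega
  · simp only [S1, Set.mem_setOf_eq, Sum.elim_inr] at hv; omega

lemma delta_not_mem_comp2 (i j : Fin 8) (hi : (i : ℕ) < 5) (hj : (j : ℕ) < 5) (hij : i ≠ j) :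
    binDelta8 K i j ∉ bipartiteComp K 2 := by
  intro hmem
  rw [mem_comp2_iff] at hmem
  have hm1 : (single (Sum.inl i) 1 + single (Sum.inr j) 1 : Mon) ∈ (binDelta8 K i j).support := by
    rw [MvPolynomial.mem_support_iff, coeff_delta K i j hij]
    exact one_ne_zero
  obtain ⟨v, hv, hmv⟩ := hmem _ hm1
  rcases pair_support i j v hmv with rfl | rfl
  · simp only [S3, Set.mem_setOf_eq, Sum.elim_inl] at hv; omega
  · simp only [S3, Set.mem_setOf_eq, Sum.elim_inr] at hv; omega

lemma prod_not_mem_comp1 : (X (Sum.inl 0) * X (Sum.inl 5) : MvPolynomial Vb K) ∉ bipartiteComp K 1 := by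
  rw [comp1_ker, RingHom.mem_ker]
  intro h
  rw [map_mul] at h
  simp only [segre, aeval_X] at h
  exact (mul_ne_zero (mul_ne_zero (X_ne_zero _) (X_ne_zero _))
    (mul_ne_zero (X_ne_zero _) (X_ne_zero _))) h

end BipartiteAux


/-- The minimal primary decomposition of the binomial edge ideal of `K_{3,5}`:
`J_G = I_{p₁} ∩ I_{p₂} ∩ I_{p₃}`, each component is prime, and no component can be omitted. -/
theorem bipartiteIdeal_minimal_primary_decomposition (K : Type) [Field K] :
    (bipartiteIdeal K = ⨅ k : Fin 3, bipartiteComp K k) ∧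
    (∀ k, (bipartiteComp K k).IsPrime) ∧
    (∀ k : Fin 3, ¬ (⨅ j ∈ ({k}ᶜ : Finset (Fin 3)), bipartiteComp K j) ≤ bipartiteComp K k) := by
  classical
  open BipartiteAux in
  have gen0 : ∀ i j : Fin 8, (i : ℕ) < 5 → 5 ≤ (j : ℕ) → binDelta8 K i j ∈ bipartiteComp K 0 := by
    intro i j hi _
    rw [comp0_eq, binDelta8]
    exact sub_mem (Ideal.mul_mem_right _ _ (Ideal.subset_span ⟨i, hi, Or.inl rfl⟩))
      (Ideal.mul_mem_left _ _ (Ideal.subset_span ⟨i, hi, Or.inr rfl⟩))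
  have gen2 : ∀ i j : Fin 8, (i : ℕ) < 5 → 5 ≤ (j : ℕ) → binDelta8 K i j ∈ bipartiteComp K 2 := by
    intro i j _ hj
    rw [comp2_eq, binDelta8]
    exact sub_mem (Ideal.mul_mem_left _ _ (Ideal.subset_span ⟨j, hj, Or.inr rfl⟩))
      (Ideal.mul_mem_right _ _ (Ideal.subset_span ⟨j, hj, Or.inl rfl⟩))
  refine ⟨?_, ?_, ?_⟩
  · apply le_antisymm
    · apply le_iInf
      intro k
      rw [bipartiteIdeal, Ideal.span_le]
      rintro f ⟨i, j, hi, hj, rfl⟩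
      rw [SetLike.mem_coe]
      fin_cases k
      · exact gen0 i j hi hj
      · exact delta_mem2 K i j (by intro h; subst h; omega)
      · exact gen2 i j hi hj
    · intro f hf
      rw [Ideal.mem_iInf] at hf
      exact inf_le_ideal K f (hf 0) (hf 1) (hf 2)
  · intro k
    fin_cases k
    · show (bipartiteComp K 0).IsPrime
      rw [show bipartiteComp K 0 = RingHom.ker (killS K S1) from comp0_ker K]
      exact RingHom.ker_isPrime _
    · show (bipartiteComp K 1).IsPrime
      rw [show bipartiteComp K 1 = RingHom.ker (segre K) from comp1_ker K]
      exact RingHom.ker_isPrime _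
    · show (bipartiteComp K 2).IsPrime
      rw [show bipartiteComp K 2 = RingHom.ker (killS K S3) from comp2_ker K]
      exact RingHom.ker_isPrime _
  · intro k
    fin_cases k
    · intro hle
      have hmem : binDelta8 K 5 6 ∈ ⨅ j ∈ ({(0 : Fin 3)}ᶜ : Finset (Fin 3)), bipartiteComp K j := by
        refine Ideal.mem_iInf.mpr fun j => Ideal.mem_iInf.mpr fun hj => ?_
        fin_cases j
        · simp at hj
        · exact delta_mem2 K 5 6 (by decide)
        · show binDelta8 K 5 6 ∈ bipartiteComp K 2
          rw [comp2_eq, binDelta8]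
          exact sub_mem
            (Ideal.mul_mem_right _ _ (Ideal.subset_span ⟨5, by decide, Or.inl rfl⟩))
            (Ideal.mul_mem_left _ _ (Ideal.subset_span ⟨5, by decide, Or.inr rfl⟩))
      exact delta_not_mem_comp0 K 5 6 (by decide) (by decide) (by decide) (hle hmem)
    · intro hle
      have hmem : (X (Sum.inl 0) * X (Sum.inl 5) : MvPolynomial (Fin 8 ⊕ Fin 8) K)
          ∈ ⨅ j ∈ ({(1 : Fin 3)}ᶜ : Finset (Fin 3)), bipartiteComp K j := by
        refine Ideal.mem_iInf.mpr fun j => Ideal.mem_iInf.mpr fun hj => ?_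
        fin_cases j
        · show _ ∈ bipartiteComp K 0
          rw [comp0_eq]
          exact Ideal.mul_mem_right _ _ (Ideal.subset_span ⟨0, by decide, Or.inl rfl⟩)
        · simp at hj
        · show _ ∈ bipartiteComp K 2
          rw [comp2_eq]
          exact Ideal.mul_mem_left _ _ (Ideal.subset_span ⟨5, by decide, Or.inl rfl⟩)
      exact prod_not_mem_comp1 K (hle hmem)
    · intro hle
      have hmem : binDelta8 K 0 1 ∈ ⨅ j ∈ ({(2 : Fin 3)}ᶜ : Finset (Fin 3)), bipartiteComp K j := by
        refine Ideal.mem_iInf.mpr fun j => Ideal.mem_iInf.mpr fun hj => ?_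
        fin_cases j
        · show binDelta8 K 0 1 ∈ bipartiteComp K 0
          rw [comp0_eq, binDelta8]
          exact sub_mem
            (Ideal.mul_mem_right _ _ (Ideal.subset_span ⟨0, by decide, Or.inl rfl⟩))
            (Ideal.mul_mem_left _ _ (Ideal.subset_span ⟨0, by decide, Or.inr rfl⟩))
        · exact delta_mem2 K 0 1 (by decide)
        · simp at hj
      exact delta_not_mem_comp2 K 0 1 (by decide) (by decide) (by decide) (hle hmem)
end
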